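/- arXiv:2201.12361 — 2 statements merged into one kernel-verified Lean document; each statement's English description precedes it below -/
import Mathlib

section
/- Let N ≥ 1, ω = exp(2πi/N), and let X, Z be the N×N generalized Pauli matrices. On the fourfold Kronecker product ℂ^{ZMod N}⊗ℂ^{ZMod N}⊗ℂ^{ZMod N}⊗ℂ^{ZMod N}, let A = Xᴴ ⊗ Xᴴ ⊗ X ⊗ X (a vertex operator) and, for g ∈ ℤ, let S = Z^g ⊗ 1 ⊗ 1 ⊗ 1 (a Z^g-string terminating on the first incident edge). Then A * S = ω^g • (S * A). Consequently, if ψ satisfies A ψ = ψ (no excitation at the vertex), then A (S ψ) = ω^g • (S ψ): the endpoint of a Z^g-string creates an electric charge e^g, i.e., an eigenvector of the vertex operator with eigenvalue ω^g. -/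
open Matrix Kronecker Complex

/-- The generalized Pauli shift matrix `X` on `ℂ^{ZMod N}`: `X (a, b) = 1` iff `a = b + 1`. -/
noncomputable def pauliX (N : ℕ) : Matrix (ZMod N) (ZMod N) ℂ :=
  fun a b => if a = b + 1 then 1 else 0

/-- The generalized Pauli phase matrix `Z` on `ℂ^{ZMod N}`: diagonal with entries `ω^a`,
where `ω = exp (2πi/N)`. -/
noncomputable def pauliZ (N : ℕ) : Matrix (ZMod N) (ZMod N) ℂ :=
  fun a b => if a = b then Complex.exp (2 * Real.pi * Complex.I / N) ^ (a.val) else 0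

lemma omega_pow_N (N : ℕ) [NeZero N] :
    Complex.exp (2 * Real.pi * Complex.I / N) ^ N = 1 := by
  rw [← Complex.exp_nat_mul]
  have hN : (N : ℂ) ≠ 0 := Nat.cast_ne_zero.2 (NeZero.ne N)
  rw [mul_div_cancel₀ _ hN, Complex.exp_two_pi_mul_I]

lemma omega_pow_mod (N : ℕ) [NeZero N] (m : ℕ) :
    Complex.exp (2 * Real.pi * Complex.I / N) ^ (m % N) =
    Complex.exp (2 * Real.pi * Complex.I / N) ^ m := by
  conv_rhs => rw [← Nat.mod_add_div m N, pow_add, pow_mul, omega_pow_N, one_pow, mul_one]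

lemma key_base (N : ℕ) [NeZero N] :
    (pauliX N)ᴴ * pauliZ N =
      Complex.exp (2 * Real.pi * Complex.I / N) • (pauliZ N * (pauliX N)ᴴ) := by
  ext a b
  simp only [mul_apply, conjTranspose_apply, pauliX, pauliZ, Matrix.smul_apply, smul_eq_mul,
    apply_ite (star : ℂ → ℂ), star_one, star_zero, ite_mul, one_mul, zero_mul,
    mul_ite, mul_zero, mul_one]
  rw [Finset.sum_ite_eq' Finset.univ b]
  have hsum : (∑ x : ZMod N, if b = x + 1 then if a = x then
      Complex.exp (2 * Real.pi * Complex.I / N) ^ a.val else 0 else 0)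
      = if b = a + 1 then Complex.exp (2 * Real.pi * Complex.I / N) ^ a.val else 0 := by
    rw [Finset.sum_eq_single a (fun x _ hx => by simp [Ne.symm hx]) (by simp)]
    simp
  rw [hsum]
  simp only [Finset.mem_univ, if_true]
  by_cases h : b = a + 1
  · subst h
    rw [if_pos rfl, if_pos rfl]
    have hv : (a + 1 : ZMod N).val = (a.val + (1 : ZMod N).val) % N := ZMod.val_add a 1
    rw [hv, omega_pow_mod, pow_add, ZMod.val_one_eq_one_mod, omega_pow_mod, pow_one, mul_comm]
  · rw [if_neg h, if_neg h, mul_zero]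

lemma pauliZ_eq_diagonal (N : ℕ) : pauliZ N =
    diagonal (fun a : ZMod N => Complex.exp (2 * Real.pi * Complex.I / N) ^ a.val) := by
  ext a b
  rw [diagonal_apply]
  rfl

lemma pauliZ_det_isUnit (N : ℕ) [NeZero N] : IsUnit (pauliZ N).det := by
  rw [pauliZ_eq_diagonal, det_diagonal]
  exact (Finset.prod_ne_zero_iff.2 fun a _ => pow_ne_zero _ (Complex.exp_ne_zero _)).isUnit

lemma key_nat (N : ℕ) [NeZero N] (n : ℕ) :
    (pauliX N)ᴴ * pauliZ N ^ n =
      Complex.exp (2 * Real.pi * Complex.I / N) ^ n • (pauliZ N ^ n * (pauliX N)ᴴ) := by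
  induction n with
  | zero => simp
  | succ n ih =>
    rw [pow_succ, ← Matrix.mul_assoc, ih, pow_succ, Matrix.smul_mul, Matrix.mul_assoc,
      key_base, mul_smul_comm, ← Matrix.mul_assoc, smul_smul]

lemma key_int (N : ℕ) [NeZero N] (g : ℤ) :
    (pauliX N)ᴴ * pauliZ N ^ g =
      Complex.exp (2 * Real.pi * Complex.I / N) ^ g • (pauliZ N ^ g * (pauliX N)ᴴ) := by
  cases g with
  | ofNat n => simpa using key_nat N n
  | negSucc n =>
    rw [zpow_negSucc, zpow_negSucc]
    set ω := Complex.exp (2 * Real.pi * Complex.I / N)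
    set B := pauliZ N ^ (n + 1) with hB
    have hdet : IsUnit B.det := by
      rw [hB, det_pow]
      exact (pauliZ_det_isUnit N).pow _
    have h := key_nat N (n + 1)
    have hω : (ω : ℂ) ^ (n + 1) ≠ 0 := pow_ne_zero _ (Complex.exp_ne_zero _)
    have h2 : B⁻¹ * (pauliX N)ᴴ = ω ^ (n + 1) • ((pauliX N)ᴴ * B⁻¹) := by
      calc B⁻¹ * (pauliX N)ᴴ = B⁻¹ * ((pauliX N)ᴴ * B) * B⁻¹ := by
            rw [Matrix.mul_assoc, Matrix.mul_assoc, mul_nonsing_inv _ hdet, Matrix.mul_one]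
        _ = ω ^ (n + 1) • ((pauliX N)ᴴ * B⁻¹) := by
            rw [h, Matrix.mul_smul, Matrix.smul_mul, ← Matrix.mul_assoc,
              nonsing_inv_mul _ hdet, Matrix.one_mul]
    rw [eq_comm, inv_smul_eq_iff₀ hω, ← h2]


/-- The vertex operator `A(v) = Xᴴ ⊗ Xᴴ ⊗ X ⊗ X` of the `ℤ_N` quantum double model. -/
noncomputable def vertexOp (N : ℕ) :
    Matrix (((ZMod N × ZMod N) × ZMod N) × ZMod N) (((ZMod N × ZMod N) × ZMod N) × ZMod N) ℂ :=
  ((pauliX N)ᴴ ⊗ₖ (pauliX N)ᴴ ⊗ₖ pauliX N) ⊗ₖ pauliX N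

/-- A `Z^g`-string terminating on the first edge incident to the vertex. -/
noncomputable def zStringEnd (N : ℕ) [NeZero N] (g : ℤ) :
    Matrix (((ZMod N × ZMod N) × ZMod N) × ZMod N) (((ZMod N × ZMod N) × ZMod N) × ZMod N) ℂ :=
  ((pauliZ N ^ g) ⊗ₖ (1 : Matrix (ZMod N) (ZMod N) ℂ) ⊗ₖ (1 : Matrix (ZMod N) (ZMod N) ℂ))
    ⊗ₖ (1 : Matrix (ZMod N) (ZMod N) ℂ)

/-- The endpoint of a `Z^g`-string creates an electric charge `e^g`:
`A * S = ω^g • (S * A)`, and hence if `A ψ = ψ` then `A (S ψ) = ω^g • (S ψ)`. -/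
theorem zString_endpoint_creates_electric_charge (N : ℕ) [NeZero N] (g : ℤ) :
    vertexOp N * zStringEnd N g =
      Complex.exp (2 * Real.pi * Complex.I / N) ^ g • (zStringEnd N g * vertexOp N) ∧
    ∀ ψ : ((ZMod N × ZMod N) × ZMod N) × ZMod N → ℂ, (vertexOp N).mulVec ψ = ψ →
      (vertexOp N).mulVec ((zStringEnd N g).mulVec ψ) =
        Complex.exp (2 * Real.pi * Complex.I / N) ^ g • (zStringEnd N g).mulVec ψ := by
  have h1 : vertexOp N * zStringEnd N g =
      Complex.exp (2 * Real.pi * Complex.I / N) ^ g • (zStringEnd N g * vertexOp N) := by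
    rw [vertexOp, zStringEnd, ← Matrix.mul_kronecker_mul, ← Matrix.mul_kronecker_mul,
      ← Matrix.mul_kronecker_mul, ← Matrix.mul_kronecker_mul, ← Matrix.mul_kronecker_mul,
      ← Matrix.mul_kronecker_mul, key_int N g, Matrix.smul_kronecker, Matrix.smul_kronecker,
      Matrix.smul_kronecker]
    simp [Matrix.mul_one, Matrix.one_mul]
  refine ⟨h1, fun ψ hψ => ?_⟩
  rw [Matrix.mulVec_mulVec, h1, Matrix.smul_mulVec, ← Matrix.mulVec_mulVec, hψ]
end

section
/- Let N ≥ 1 and let X, Z be the N×N generalized Pauli matrices over ℂ. Then for all integers g, h, on the threefold Kronecker product ℂ^{ZMod N}⊗ℂ^{ZMod N}⊗ℂ^{ZMod N} the matrices (X^h ⊗ (Zᴴ)^g ⊗ (Zᴴ)^h) and (Zᴴ ⊗ Zᴴ ⊗ X) commute: (X^h ⊗ (Zᴴ)^g ⊗ (Zᴴ)^h) * (Zᴴ ⊗ Zᴴ ⊗ X) = (Zᴴ ⊗ Zᴴ ⊗ X) * (X^h ⊗ (Zᴴ)^g ⊗ (Zᴴ)^h). This is the content of Proposition 5.2 of the paper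 (the EM-exchange ribbon operator commutes with the modified face operator B̃(f) on a dislocation line) restricted to their shared edges: the first factor contributes a Weyl phase ω^h, the second factor contributes no phase, and the third factor contributes ω^{−h}, so the phases cancel; on non-shared edges the operators act on disjoint tensor factors and commute trivially. -/
open Matrix Kronecker Complex

section Aux

variable (N : ℕ) [NeZero N]

noncomputable abbrev omg : ℂ := Complex.exp (2 * Real.pi * Complex.I / N)

lemma omg_pow_N : omg N ^ N = 1 := by
  rw [← Complex.exp_nat_mul]
  have hN : (N : ℂ) ≠ 0 := Nat.cast_ne_zero.mpr (NeZero.ne N)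
  rw [mul_comm, div_mul_cancel₀ _ hN, Complex.exp_two_pi_mul_I]

lemma star_omg_mul : star (omg N) * omg N = 1 := by
  have key : (starRingEnd ℂ) (2 * Real.pi * Complex.I / N) = -(2 * Real.pi * Complex.I / N) := by
    simp [map_div₀, Complex.conj_I, map_ofNat]
    ring
  show (starRingEnd ℂ) (Complex.exp _) * _ = 1
  rw [← Complex.exp_conj, ← Complex.exp_add, key, neg_add_cancel, Complex.exp_zero]

lemma star_omg_pow_N : (star (omg N)) ^ N = 1 := by
  rw [← star_pow, omg_pow_N, star_one]

lemma star_omg_pow_mod (k : ℕ) :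
    (star (omg N)) ^ (k % N) = (star (omg N)) ^ k := by
  conv_rhs => rw [← Nat.div_add_mod k N, pow_add, pow_mul, star_omg_pow_N, one_pow, one_mul]

lemma pauliZ_eq : pauliZ N = Matrix.diagonal (fun a => omg N ^ a.val) := by
  ext a b
  rw [Matrix.diagonal_apply]
  rfl

lemma pauliZH_eq : (pauliZ N)ᴴ = Matrix.diagonal (fun a => star (omg N) ^ a.val) := by
  ext a b
  simp only [Matrix.conjTranspose_apply, Matrix.diagonal_apply, pauliZ]
  by_cases hab : a = b
  · subst hab; simp [star_pow]
  · simp [hab, Ne.symm hab]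

lemma val_add_one (b : ZMod N) : (b + 1 : ZMod N).val = (b.val + 1) % N := by
  rcases eq_or_ne N 1 with h1 | h1
  · subst h1
    have : ∀ x : ZMod 1, x.val = 0 := fun x => by
      have := x.val_lt; omega
    simp [this]
  · rw [ZMod.val_add, ZMod.val_one'' h1]

/-- Weyl relation for `X` and `W = Zᴴ`. -/
lemma weyl : pauliX N * (pauliZ N)ᴴ = omg N • ((pauliZ N)ᴴ * pauliX N) := by
  rw [pauliZH_eq]
  ext a b
  rw [Matrix.mul_diagonal, Matrix.smul_apply, Matrix.diagonal_mul, smul_eq_mul]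
  show (if a = b + 1 then (1:ℂ) else 0) * _ = _ * (_ * if a = b + 1 then (1:ℂ) else 0)
  by_cases hab : a = b + 1
  · rw [if_pos hab, one_mul, hab, mul_one, val_add_one, star_omg_pow_mod, pow_succ,
      ← mul_assoc, mul_comm (omg N), mul_assoc, mul_comm (omg N), star_omg_mul, mul_one]
  · simp [hab]

lemma isUnit_det_pauliX : IsUnit (pauliX N).det := by
  have h : pauliX N * (pauliX N)ᴴ = 1 := by
    ext a b
    simp only [Matrix.mul_apply, pauliX, Matrix.conjTranspose_apply, Matrix.one_apply,
      apply_ite (star : ℂ → ℂ), star_one, star_zero]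
    rw [Finset.sum_eq_single (a - 1)]
    · rw [if_pos (by ring), one_mul]
      by_cases hab : a = b
      · rw [if_pos (by rw [hab]; ring), if_pos hab]
      · rw [if_neg (fun h => hab (by linear_combination -h)), if_neg hab]
    · intro c _ hc
      rw [if_neg (fun h => hc (by rw [h]; ring)), zero_mul]
    · simp
  exact Matrix.isUnit_det_of_right_inverse h

lemma isUnit_det_pauliW : IsUnit ((pauliZ N)ᴴ).det := by
  have h : (pauliZ N)ᴴ * pauliZ N = 1 := by
    rw [pauliZH_eq, pauliZ_eq, Matrix.diagonal_mul_diagonal]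
    convert Matrix.diagonal_one
    rw [← mul_pow, star_omg_mul, one_pow]
  exact Matrix.isUnit_det_of_right_inverse h

/-- If `A * B = c • (B * A)` with `c ≠ 0` and `A` invertible, then
`A ^ h * B = c ^ h • (B * A ^ h)` for all integers `h`. -/
lemma zpow_semiconj {n : Type*} [Fintype n] [DecidableEq n]
    (A B : Matrix n n ℂ) (c : ℂ) (hc : c ≠ 0) (hA : IsUnit A.det)
    (hAB : A * B = c • (B * A)) (h : ℤ) :
    A ^ h * B = c ^ h • (B * A ^ h) := by
  have natcase : ∀ m : ℕ, A ^ m * B = c ^ m • (B * A ^ m) := by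
    intro m
    induction m with
    | zero => simp
    | succ k ih =>
      rw [pow_succ, mul_assoc, hAB, Matrix.mul_smul, ← mul_assoc, ih,
        Matrix.smul_mul, smul_smul, pow_succ, mul_assoc, mul_comm (c ^ k) c]
  rcases h with m | m
  · simpa [zpow_natCast] using natcase m
  · rw [zpow_negSucc, zpow_negSucc]
    have hAd : IsUnit (A ^ (m + 1)).det := by rw [Matrix.det_pow]; exact hA.pow _
    have key := natcase (m + 1)
    have hcm : (c ^ (m + 1)) ≠ 0 := pow_ne_zero _ hc
    have hBA : B * A ^ (m + 1) = (c ^ (m + 1))⁻¹ • (A ^ (m + 1) * B) := by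
      rw [key, smul_smul, inv_mul_cancel₀ hcm, one_smul]
    calc (A ^ (m + 1))⁻¹ * B
        = (A ^ (m + 1))⁻¹ * (B * (A ^ (m + 1) * (A ^ (m + 1))⁻¹)) := by
          rw [Matrix.mul_nonsing_inv _ hAd, mul_one]
      _ = (A ^ (m + 1))⁻¹ * ((B * A ^ (m + 1)) * (A ^ (m + 1))⁻¹) := by
          rw [mul_assoc]
      _ = (c ^ (m + 1))⁻¹ • ((A ^ (m + 1))⁻¹ * (A ^ (m + 1) * B) * (A ^ (m + 1))⁻¹) := by
          rw [hBA, Matrix.smul_mul, Matrix.mul_smul]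
          congr 1
          simp only [mul_assoc]
      _ = (c ^ (m + 1))⁻¹ • (B * (A ^ (m + 1))⁻¹) := by
          rw [← mul_assoc, Matrix.nonsing_inv_mul _ hAd, one_mul]

end Aux

/-- The EM-exchange ribbon operator commutes with the modified face operator on the
dislocation line, restricted to their three shared edges:
`(X^h ⊗ (Zᴴ)^g ⊗ (Zᴴ)^h) * (Zᴴ ⊗ Zᴴ ⊗ X) = (Zᴴ ⊗ Zᴴ ⊗ X) * (X^h ⊗ (Zᴴ)^g ⊗ (Zᴴ)^h)`. -/
theorem em_ribbon_commutes_with_dislocation_faceOp (N : ℕ) [NeZero N] (g h : ℤ) :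
    ((pauliX N ^ h) ⊗ₖ ((pauliZ N)ᴴ ^ g) ⊗ₖ ((pauliZ N)ᴴ ^ h)) *
        ((pauliZ N)ᴴ ⊗ₖ (pauliZ N)ᴴ ⊗ₖ pauliX N) =
      ((pauliZ N)ᴴ ⊗ₖ (pauliZ N)ᴴ ⊗ₖ pauliX N) *
        ((pauliX N ^ h) ⊗ₖ ((pauliZ N)ᴴ ^ g) ⊗ₖ ((pauliZ N)ᴴ ^ h)) := by
  set X := pauliX N with hXdef
  set W := (pauliZ N)ᴴ with hWdef
  have hω : omg N ≠ 0 := Complex.exp_ne_zero _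
  have hX : IsUnit X.det := isUnit_det_pauliX N
  have hW : IsUnit W.det := isUnit_det_pauliW N
  have hXW : X * W = omg N • (W * X) := weyl N
  have hWX : W * X = (omg N)⁻¹ • (X * W) := by
    rw [hXW, smul_smul, inv_mul_cancel₀ hω, one_smul]
  have h1 : X ^ h * W = (omg N) ^ h • (W * X ^ h) :=
    zpow_semiconj X W (omg N) hω hX hXW h
  have h3 : W ^ h * X = ((omg N)⁻¹) ^ h • (X * W ^ h) :=
    zpow_semiconj W X ((omg N)⁻¹) (inv_ne_zero hω) hW hWX h
  have h2 : W ^ g * W = W * W ^ g := by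
    rw [← Matrix.zpow_add_one hW, ← Matrix.zpow_one_add hW, add_comm]
  rw [← Matrix.mul_kronecker_mul, ← Matrix.mul_kronecker_mul,
    ← Matrix.mul_kronecker_mul, ← Matrix.mul_kronecker_mul, h1, h2, h3,
    Matrix.smul_kronecker, Matrix.smul_kronecker, Matrix.kronecker_smul, smul_smul]
  rw [_root_.inv_zpow, mul_inv_cancel₀ (zpow_ne_zero h hω), one_smul]
end
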